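/- arXiv:2305.09549 — 2 statements merged into one kernel-verified Lean document; each statement's English description precedes it below -/
import Mathlib

section
/- If a directed graph G on n ≥ 2 vertices in which every vertex has an outgoing edge has a Hamiltonian cycle, then the derived binary preference profile on 3n agents admits an envy-free arrangement on a cycle of 3n seats; conversely, if an envy-free arrangement exists, G has a Hamiltonian cycle. -/
open Finset

/-- The cycle graph (round table) on `Fin n`: seat `i` is adjacent to seat `i±1 (mod n)`. -/
def cycleG (n : ℕ) : SimpleGraph (Fin n) where
  Adj i j := i ≠ j ∧ (((i : ℕ) + 1) % n = (j : ℕ) ∨ ((j : ℕ) + 1) % n = (i : ℕ))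
  symm := ⟨fun i j h => ⟨h.1.symm, h.2.symm⟩⟩
  loopless := ⟨fun i h => h.1 rfl⟩

instance (n : ℕ) : DecidableRel (cycleG n).Adj := fun _ _ =>
  inferInstanceAs (Decidable (_ ∧ _))

/-- The path graph on `Fin n`: seat `i` is adjacent to seat `i±1`. -/
def pathG (n : ℕ) : SimpleGraph (Fin n) where
  Adj i j := i ≠ j ∧ ((i : ℕ) + 1 = (j : ℕ) ∨ (j : ℕ) + 1 = (i : ℕ))
  symm := ⟨fun i j h => ⟨h.1.symm, h.2.symm⟩⟩
  loopless := ⟨fun i h => h.1 rfl⟩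

instance (n : ℕ) : DecidableRel (pathG n).Adj := fun _ _ =>
  inferInstanceAs (Decidable (_ ∧ _))

/-- Utility of agent `a` under the arrangement `π` (a bijection from agents to seats):
the sum of `a`'s preferences towards the agents seated at neighboring seats. -/
def utility {A V : Type} [Fintype V] [DecidableEq V]
    (G : SimpleGraph V) [DecidableRel G.Adj]
    (p : A → A → ℝ) (π : A ≃ V) (a : A) : ℝ :=
  ∑ v ∈ G.neighborFinset (π a), p a (π.symm v)

/-- The arrangement obtained from `π` by swapping the seats of agents `a` and `b`. -/
def swapArr {A V : Type} [DecidableEq A] (π : A ≃ V) (a b : A) : A ≃ V :=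
  (Equiv.swap a b).trans π

/-- Agent `a` envies agent `b`: `a`'s utility strictly increases when they swap seats. -/
def envies {A V : Type} [DecidableEq A] [Fintype V] [DecidableEq V]
    (G : SimpleGraph V) [DecidableRel G.Adj]
    (p : A → A → ℝ) (π : A ≃ V) (a b : A) : Prop :=
  utility G p π a < utility G p (swapArr π a b) a

/-- `(a, b)` is a blocking pair: both agents strictly gain by exchanging seats. -/
def blocking {A V : Type} [DecidableEq A] [Fintype V] [DecidableEq V]
    (G : SimpleGraph V) [DecidableRel G.Adj]
    (p : A → A → ℝ) (π : A ≃ V) (a b : A) : Prop :=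
  a ≠ b ∧ envies G p π a b ∧ envies G p π b a

/-- An arrangement is stable if it admits no blocking pair. -/
def stable {A V : Type} [DecidableEq A] [Fintype V] [DecidableEq V]
    (G : SimpleGraph V) [DecidableRel G.Adj]
    (p : A → A → ℝ) (π : A ≃ V) : Prop :=
  ∀ a b, ¬ blocking G p π a b

/-- An arrangement is envy-free if no agent envies another. -/
def envyFree {A V : Type} [DecidableEq A] [Fintype V] [DecidableEq V]
    (G : SimpleGraph V) [DecidableRel G.Adj]
    (p : A → A → ℝ) (π : A ≃ V) : Prop :=
  ∀ a b, a ≠ b → ¬ envies G p π a b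

/-- The profile `p` has (at most) `k` classes of pairwise indistinguishable agents. -/
def hasClasses {A : Type} (k : ℕ) (p : A → A → ℝ) : Prop :=
  ∃ (c : A → Fin k) (q : Fin k → Fin k → ℝ),
    ∀ a b : A, a ≠ b → p a b = q (c a) (c b)

/-- The profile `p` is `k`-valued: all (off-diagonal) entries come from a set of at
most `k` reals. -/
def kValued {A : Type} (k : ℕ) (p : A → A → ℝ) : Prop :=
  ∃ Γ : Finset ℝ, Γ.card ≤ k ∧ ∀ a b : A, a ≠ b → p a b ∈ Γ

/-- Utilitarian social welfare: the sum of all agents' utilities. -/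
def welfare {A V : Type} [Fintype A] [Fintype V] [DecidableEq V]
    (G : SimpleGraph V) [DecidableRel G.Adj]
    (p : A → A → ℝ) (π : A ≃ V) : ℝ :=
  ∑ a : A, utility G p π a

/-- The seat following seat `s` on the cycle of `n` seats. -/
def nextSeat {n : ℕ} (s : Fin n) : Fin n :=
  ⟨((s : ℕ) + 1) % n, Nat.mod_lt _ (Nat.lt_of_le_of_lt (Nat.zero_le _) s.isLt)⟩

/-- The directed graph `E` has a Hamiltonian cycle. -/
def hasHamCycle {n : ℕ} (E : Fin n → Fin n → Prop) : Prop :=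
  ∃ σ : Fin n ≃ Fin n, ∀ i : Fin n, E (σ i) (σ (nextSeat i))

/-- The binary preference profile derived from the directed graph `E`: agents
`(v, 0) = x_v`, `(v, 1) = y_v`, `(v, 2) = z_v`; `x_v` approves only `y_v`, `y_v`
approves only `z_v`, and `z_v` approves exactly the `x_u` with `E v u`. -/
def derivedPref {n : ℕ} (E : Fin n → Fin n → Prop) [DecidableRel E] :
    (Fin n × Fin 3) → (Fin n × Fin 3) → ℝ := fun a b =>
  if a.2 = 0 then (if b.1 = a.1 ∧ b.2 = 1 then 1 else 0)
  else if a.2 = 1 then (if b.1 = a.1 ∧ b.2 = 2 then 1 else 0)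
  else (if b.2 = 0 ∧ E a.1 b.1 then 1 else 0)

open Fin.CommRing

section helpers
variable {m : ℕ} [NeZero m]

lemma valOne (hm : 3 ≤ m) : (1 : Fin m).val = 1 := by
  rw [Fin.val_one', Nat.mod_eq_of_lt (by omega)]

lemma oneNeZero (hm : 3 ≤ m) : (1 : Fin m) ≠ 0 := by
  intro h; have := congrArg Fin.val h; rw [valOne hm] at this; simp at this

lemma twoNeZero (hm : 3 ≤ m) : (1 + 1 : Fin m) ≠ 0 := by
  intro h
  have hv : ((1:Fin m) + 1).val = 2 % m := by rw [Fin.add_def, valOne hm]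
  rw [h, Nat.mod_eq_of_lt (by omega)] at hv
  simp at hv

lemma subOneNeAddOne (hm : 3 ≤ m) (s : Fin m) : s - 1 ≠ s + 1 := by
  intro h
  rw [sub_eq_iff_eq_add] at h
  have : s = s + (1 + 1) := by nth_rewrite 1 [h]; ring
  rw [left_eq_add] at this
  exact twoNeZero hm this

lemma addOne_eq_iff (hm : 3 ≤ m) (s j : Fin m) : s + 1 = j ↔ (s.val + 1) % m = j.val := by
  rw [Fin.ext_iff, Fin.add_def, valOne hm]

lemma eq_sub_one_iff (hm : 3 ≤ m) (s j : Fin m) : j = s - 1 ↔ (j.val + 1) % m = s.val := by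
  rw [eq_sub_iff_add_eq, Fin.ext_iff, Fin.add_def, valOne hm]

lemma adj_iff (hm : 3 ≤ m) (s j : Fin m) :
    (cycleG m).Adj s j ↔ (j = s - 1 ∨ j = s + 1) := by
  show (s ≠ j ∧ _) ↔ _
  constructor
  · rintro ⟨hne, h | h⟩
    · exact Or.inr ((addOne_eq_iff hm s j).mpr h).symm
    · exact Or.inl ((eq_sub_one_iff hm s j).mpr h)
  · rintro (h | h)
    · refine ⟨fun he => ?_, Or.inr ((eq_sub_one_iff hm s j).mp h)⟩
      rw [← he] at h
      rw [eq_comm, sub_eq_self] at h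
      exact oneNeZero hm h
    · refine ⟨fun he => ?_, Or.inl ((addOne_eq_iff hm s j).mp h.symm)⟩
      rw [← he, left_eq_add] at h
      exact oneNeZero hm h

lemma nbhd (hm : 3 ≤ m) (s : Fin m) :
    (cycleG m).neighborFinset s = {s - 1, s + 1} := by
  ext j
  rw [SimpleGraph.mem_neighborFinset, adj_iff hm]
  simp

end helpers

section helpers2
variable {m : ℕ} [NeZero m] {A : Type} [DecidableEq A]

lemma utility_pair (hm : 3 ≤ m) (p : A → A → ℝ) (π : A ≃ Fin m) (a : A) :
    utility (cycleG m) p π a = p a (π.symm (π a - 1)) + p a (π.symm (π a + 1)) := by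
  rw [utility, nbhd hm, Finset.sum_pair (subOneNeAddOne hm _)]

lemma swapArr_apply (π : A ≃ Fin m) (a b x : A) :
    swapArr π a b x = π (Equiv.swap a b x) := rfl

lemma swapArr_symm (π : A ≃ Fin m) (a b : A) (s : Fin m) :
    (swapArr π a b).symm s = Equiv.swap a b (π.symm s) := by
  simp [swapArr, Equiv.symm_trans_apply]

lemma exists_good_neighbor (hm : 3 ≤ m) (p : A → A → ℝ) (hp : ∀ x y, 0 ≤ p x y)
    (π : A ≃ Fin m) (hEF : envyFree (cycleG m) p π) {a c : A} (hac : a ≠ c)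
    (hpc : p a c = 1) :
    ∃ d : A, (π d = π a - 1 ∨ π d = π a + 1) ∧ 0 < p a d := by
  have hpos : 0 < utility (cycleG m) p π a := by
    by_contra hle
    push_neg at hle
    -- choose seat s neighboring π c, distinct from π a
    have hsub : π c - 1 ≠ π c := fun h => oneNeZero hm (by rwa [sub_eq_self] at h)
    have hadd : π c + 1 ≠ π c := fun h => oneNeZero hm (by rwa [add_eq_left] at h)
    obtain ⟨s, hs, hsa⟩ : ∃ s : Fin m, (π c = s + 1 ∨ π c = s - 1) ∧ s ≠ π a := by
      by_cases h1 : π c - 1 = π a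
      · refine ⟨π c + 1, Or.inr ?_, fun h => subOneNeAddOne hm (π c) (h1.trans h.symm)⟩
        rw [add_sub_cancel_right]
      · exact ⟨π c - 1, Or.inl (by rw [sub_add_cancel]), h1⟩
    set b := π.symm s with hb
    have hπb : π b = s := Equiv.apply_symm_apply π s
    have hba : b ≠ a := fun h => hsa (by rw [← hπb, h])
    have hbc : b ≠ c := by
      intro h
      rw [h] at hπb
      rcases hs with h' | h'
      · rw [hπb, left_eq_add] at h'; exact oneNeZero hm h'
      · rw [hπb, eq_comm, sub_eq_self] at h'; exact oneNeZero hm h'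
    refine hEF a b (fun h => hba h.symm) ?_
    rw [envies]
    have hρa : swapArr π a b a = s := by
      rw [swapArr_apply, Equiv.swap_apply_left, hπb]
    have hcc : ∀ t : Fin m, π c = t → (swapArr π a b).symm t = c := by
      intro t ht
      rw [swapArr_symm, ← ht, Equiv.symm_apply_apply,
        Equiv.swap_apply_of_ne_of_ne (Ne.symm hac) (Ne.symm hbc)]
    have key : (1:ℝ) ≤ utility (cycleG m) p (swapArr π a b) a := by
      rw [utility_pair hm, hρa]
      rcases hs with h' | h'
      · rw [hcc _ h', hpc]
        have := hp a ((swapArr π a b).symm (s - 1))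
        linarith
      · rw [hcc _ h', hpc]
        have := hp a ((swapArr π a b).symm (s + 1))
        linarith
    linarith
  rw [utility_pair hm] at hpos
  by_cases h1 : 0 < p a (π.symm (π a - 1))
  · exact ⟨π.symm (π a - 1), Or.inl (Equiv.apply_symm_apply _ _), h1⟩
  · refine ⟨π.symm (π a + 1), Or.inr (Equiv.apply_symm_apply _ _), ?_⟩
    push_neg at h1
    linarith

end helpers2

section fwd
variable {n : ℕ}

lemma seat_lt (hn : 2 ≤ n) (a : Fin n × Fin 3) (σ : Fin n ≃ Fin n) :
    3 * (σ.symm a.1).val + a.2.val < 3 * n := by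
  have h1 := (σ.symm a.1).isLt
  have h2 := a.2.isLt
  omega

noncomputable def fwdE (hn : 2 ≤ n) (σ : Fin n ≃ Fin n) : (Fin n × Fin 3) ≃ Fin (3 * n) :=
  Equiv.ofBijective (fun a => ⟨3 * (σ.symm a.1).val + a.2.val, seat_lt hn a σ⟩)
    (by
      rw [Fintype.bijective_iff_injective_and_card]
      constructor
      · intro a b hab
        have h := congrArg Fin.val hab
        simp only at h
        have h1 := a.2.isLt
        have h2 := b.2.isLt
        have hst : (σ.symm a.1).val = (σ.symm b.1).val ∧ a.2.val = b.2.val := by omega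
        have hfst : a.1 = b.1 := by
          have := σ.symm.injective (Fin.ext hst.1)
          exact this
        exact Prod.ext hfst (Fin.ext hst.2)
      · simp [mul_comm])

lemma fwdE_apply (hn : 2 ≤ n) (σ : Fin n ≃ Fin n) (a : Fin n × Fin 3) :
    (fwdE hn σ a).val = 3 * (σ.symm a.1).val + a.2.val := rfl

lemma fwdE_symm (hn : 2 ≤ n) (σ : Fin n ≃ Fin n) (s : Fin (3 * n)) (v : Fin n) (t : Fin 3)
    (h : s.val = 3 * (σ.symm v).val + t.val) : (fwdE hn σ).symm s = (v, t) := by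
  rw [Equiv.symm_apply_eq]
  exact Fin.ext h

lemma fwdE_type (hn : 2 ≤ n) (σ : Fin n ≃ Fin n) (s : Fin (3 * n)) :
    ((fwdE hn σ).symm s).2.val = s.val % 3 := by
  have h : (fwdE hn σ ((fwdE hn σ).symm s)).val = s.val := by
    rw [Equiv.apply_symm_apply]
  rw [fwdE_apply] at h
  have := ((fwdE hn σ).symm s).2.isLt
  omega

end fwd

section fwd2
variable {n : ℕ} [NeZero n]

lemma mod3_add (hn : 2 ≤ n) (s : Fin (3 * n)) : (s + 1).val % 3 = (s.val + 1) % 3 := by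
  rw [Fin.add_def, valOne (by omega)]
  rw [Nat.mod_mod_of_dvd _ ⟨n, rfl⟩]

lemma mod3_sub (hn : 2 ≤ n) (s : Fin (3 * n)) : (s - 1).val % 3 = (s.val + 2) % 3 := by
  rw [Fin.sub_def, valOne (by omega)]
  rw [Nat.mod_mod_of_dvd _ ⟨n, rfl⟩]
  omega

lemma val_add_one (hn : 2 ≤ n) (s : Fin (3 * n)) (h : s.val + 1 < 3 * n) :
    (s + 1).val = s.val + 1 := by
  rw [Fin.add_def, valOne (by omega)]
  exact Nat.mod_eq_of_lt h

lemma dp_x {E : Fin n → Fin n → Prop} [DecidableRel E] (v : Fin n) (d : Fin n × Fin 3) :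
    derivedPref E (v, 0) d = if d = (v, 1) then 1 else 0 := by
  simp [derivedPref, Prod.ext_iff, and_comm]

lemma dp_y {E : Fin n → Fin n → Prop} [DecidableRel E] (v : Fin n) (d : Fin n × Fin 3) :
    derivedPref E (v, 1) d = if d = (v, 2) then 1 else 0 := by
  have h0 : ((1:Fin 3) = 0) = False := by simp [Fin.ext_iff]
  simp [derivedPref, h0, Prod.ext_iff, and_comm]

lemma dp_z {E : Fin n → Fin n → Prop} [DecidableRel E] (v : Fin n) (d : Fin n × Fin 3) :
    derivedPref E (v, 2) d = if d.2 = 0 ∧ E v d.1 then 1 else 0 := by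
  have h0 : ((2:Fin 3) = 0) = False := by simp [Fin.ext_iff]
  have h1 : ((2:Fin 3) = 1) = False := by simp [Fin.ext_iff]
  simp [derivedPref, h0, h1]

end fwd2

section fwd3
variable {n : ℕ} [NeZero n] {E : Fin n → Fin n → Prop} [DecidableRel E]

lemma util_x (hn : 2 ≤ n) (σ : Fin n ≃ Fin n) (v : Fin n) :
    utility (cycleG (3 * n)) (derivedPref E) (fwdE hn σ) (v, 0) = 1 := by
  have hm : 3 ≤ 3 * n := by omega
  rw [utility_pair hm]
  set π := fwdE hn σ with hπ
  set k := (σ.symm v).val with hk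
  have hkn : k < n := (σ.symm v).isLt
  have hw : (π (v, 0)).val = 3 * k := by
    have := fwdE_apply hn σ (v, 0); simpa using this
  have hplus : π.symm (π (v, 0) + 1) = (v, 1) := by
    apply fwdE_symm
    rw [val_add_one hn _ (by omega)]
    simp [hw, ← hk]
  have hsubty : (π.symm (π (v, 0) - 1)).2.val = 2 := by
    rw [fwdE_type, mod3_sub hn, hw]
    omega
  have hsub0 : derivedPref E (v, 0) (π.symm (π (v, 0) - 1)) = 0 := by
    rw [dp_x, if_neg]
    intro h
    rw [h] at hsubty
    simp at hsubty
  rw [hplus, hsub0, dp_x, if_pos rfl]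
  norm_num

lemma util_y (hn : 2 ≤ n) (σ : Fin n ≃ Fin n) (v : Fin n) :
    utility (cycleG (3 * n)) (derivedPref E) (fwdE hn σ) (v, 1) = 1 := by
  have hm : 3 ≤ 3 * n := by omega
  rw [utility_pair hm]
  set π := fwdE hn σ with hπ
  set k := (σ.symm v).val with hk
  have hkn : k < n := (σ.symm v).isLt
  have hw : (π (v, 1)).val = 3 * k + 1 := by
    have := fwdE_apply hn σ (v, 1); simpa using this
  have hplus : π.symm (π (v, 1) + 1) = (v, 2) := by
    apply fwdE_symm
    rw [val_add_one hn _ (by omega)]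
    simp [hw, ← hk]
  have hsubty : (π.symm (π (v, 1) - 1)).2.val = 0 := by
    rw [fwdE_type, mod3_sub hn, hw]
    omega
  have hsub0 : derivedPref E (v, 1) (π.symm (π (v, 1) - 1)) = 0 := by
    rw [dp_y, if_neg]
    intro h
    rw [h] at hsubty
    simp at hsubty
  rw [hplus, hsub0, dp_y, if_pos rfl]
  norm_num

lemma util_z (hn : 2 ≤ n) (σ : Fin n ≃ Fin n) (hσ : ∀ i : Fin n, E (σ i) (σ (nextSeat i)))
    (v : Fin n) :
    utility (cycleG (3 * n)) (derivedPref E) (fwdE hn σ) (v, 2) = 1 := by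
  have hm : 3 ≤ 3 * n := by omega
  rw [utility_pair hm]
  set π := fwdE hn σ with hπ
  set k := σ.symm v with hk
  have hkn : k.val < n := k.isLt
  have hw : (π (v, 2)).val = 3 * k.val + 2 := by
    have := fwdE_apply hn σ (v, 2); simpa using this
  have hplus : π.symm (π (v, 2) + 1) = (σ (nextSeat k), 0) := by
    apply fwdE_symm
    rw [Fin.add_def, valOne (by omega : 3 ≤ 3*n)]
    show ((π (v, 2)).val + 1) % (3 * n) = _
    rw [hw]
    simp only [Equiv.symm_apply_apply]
    show (3 * k.val + 2 + 1) % (3 * n) = 3 * ((k.val + 1) % n) + (0 : Fin 3).val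
    have : 3 * k.val + 2 + 1 = 3 * (k.val + 1) := by ring
    rw [this, Nat.mul_mod_mul_left]
    simp
  have hsubty : (π.symm (π (v, 2) - 1)).2.val = 1 := by
    rw [fwdE_type, mod3_sub hn, hw]
    omega
  have hsub0 : derivedPref E (v, 2) (π.symm (π (v, 2) - 1)) = 0 := by
    rw [dp_z, if_neg]
    rintro ⟨h, -⟩
    rw [h] at hsubty
    simp at hsubty
  have hE : E v (σ (nextSeat k)) := by
    have := hσ k
    rwa [hk, Equiv.apply_symm_apply] at this
  rw [hplus, hsub0, dp_z, if_pos ⟨rfl, hE⟩]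
  norm_num

lemma util_one (hn : 2 ≤ n) (σ : Fin n ≃ Fin n) (hσ : ∀ i : Fin n, E (σ i) (σ (nextSeat i)))
    (a : Fin n × Fin 3) :
    utility (cycleG (3 * n)) (derivedPref E) (fwdE hn σ) a = 1 := by
  obtain ⟨v, t⟩ := a
  have : t = 0 ∨ t = 1 ∨ t = 2 := by
    have h3 := t.isLt
    have : t.val = 0 ∨ t.val = 1 ∨ t.val = 2 := by omega
    rcases this with h | h | h
    · exact Or.inl (Fin.ext h)
    · exact Or.inr (Or.inl (Fin.ext h))
    · exact Or.inr (Or.inr (Fin.ext h))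
  rcases this with h | h | h <;> subst h
  · exact util_x hn σ v
  · exact util_y hn σ v
  · exact util_z hn σ hσ v

end fwd3

section fwd4
variable {m : ℕ} [NeZero m] {A : Type} [DecidableEq A]

lemma util_le_single (hm : 3 ≤ m) (p : A → A → ℝ) (ρ : A ≃ Fin m) (a c : A)
    (hpc : ∀ x, p a x = if x = c then 1 else 0) :
    utility (cycleG m) p ρ a ≤ 1 := by
  rw [utility_pair hm]
  have hne : ρ.symm (ρ a - 1) ≠ ρ.symm (ρ a + 1) := by
    intro h
    exact subOneNeAddOne hm (ρ a) (by
      have := congrArg ρ h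
      simpa using this)
  rw [hpc, hpc]
  by_cases h1 : ρ.symm (ρ a - 1) = c <;> by_cases h2 : ρ.symm (ρ a + 1) = c
  · exact absurd (h1.trans h2.symm) hne
  all_goals simp [h1, h2]

end fwd4

section fwd5
variable {n : ℕ} [NeZero n] {E : Fin n → Fin n → Prop} [DecidableRel E]

lemma util_z_swap (hn : 2 ≤ n) (σ : Fin n ≃ Fin n) (v : Fin n) (b : Fin n × Fin 3) :
    utility (cycleG (3 * n)) (derivedPref E) (swapArr (fwdE hn σ) (v, 2) b) (v, 2) ≤ 1 := by
  have hm : 3 ≤ 3 * n := by omega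
  set π := fwdE hn σ with hπ
  set a : Fin n × Fin 3 := (v, 2) with ha
  set ρ := swapArr π a b with hρ
  rw [utility_pair hm]
  have hρa : ρ a = π b := by rw [hρ, swapArr]; simp
  rw [hρa]
  set s₁ := π b - 1 with hs₁
  set s₂ := π b + 1 with hs₂
  set w := (π b).val with hw
  -- basic seat type facts
  have f1 : s₁.val % 3 = (w + 2) % 3 := mod3_sub hn (π b)
  have f2 : s₂.val % 3 = (w + 1) % 3 := mod3_add hn (π b)
  have haty : (π a).val % 3 = 2 := by
    rw [hπ, ha]
    have h := fwdE_apply hn σ (v, 2)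
    have h2 : ((v, (2:Fin 3)).2).val = 2 := rfl
    omega
  have hbty : w % 3 = b.2.val := by
    rw [hw, hπ]
    have h := fwdE_apply hn σ b
    have := b.2.isLt
    omega
  -- occupants
  have hone : (1 : Fin (3*n)) ≠ 0 := by
    intro h
    have := congrArg Fin.val h
    rw [valOne hm] at this
    simp at this
  have hb1 : π.symm s₁ ≠ b := by
    intro h
    rw [Equiv.symm_apply_eq] at h
    rw [hs₁, sub_eq_self] at h
    exact hone h
  have hb2 : π.symm s₂ ≠ b := by
    intro h
    rw [Equiv.symm_apply_eq] at h
    rw [hs₂, eq_comm, left_eq_add] at h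
    exact hone h
  have hocc : ∀ s : Fin (3*n), π.symm s ≠ b →
      ρ.symm s = if π.symm s = a then b else π.symm s := by
    intro s hsb
    rw [hρ, swapArr_symm]
    by_cases h : π.symm s = a
    · rw [if_pos h, h, Equiv.swap_apply_left]
    · rw [if_neg h, Equiv.swap_apply_of_ne_of_ne h hsb]
  have key : ¬ ((ρ.symm s₁).2.val = 0 ∧ (ρ.symm s₂).2.val = 0) := by
    rintro ⟨k1, k2⟩
    rw [hocc s₁ hb1] at k1
    rw [hocc s₂ hb2] at k2
    have e1 : (π.symm s₁).2.val = (w + 2) % 3 := by rw [fwdE_type hn σ s₁]; exact f1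
    have e2 : (π.symm s₂).2.val = (w + 1) % 3 := by rw [fwdE_type hn σ s₂]; exact f2
    by_cases h1 : π.symm s₁ = a <;> by_cases h2 : π.symm s₂ = a
    · rw [Equiv.symm_apply_eq] at h1 h2
      exact subOneNeAddOne hm (π b) (h1.trans h2.symm)
    · -- s₁ holds a's seat: w % 3 = 0, then s₂ type is 1
      rw [if_pos h1] at k1
      rw [if_neg h2] at k2
      have hs1a : (w + 2) % 3 = 2 := by
        rw [← f1]
        rw [Equiv.symm_apply_eq] at h1
        rw [h1]
        exact haty
      rw [e2] at k2
      have hb0 : b.2.val = (π b).val % 3 := hbty.symm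
      omega
    · rw [if_pos h2] at k2
      have hs2a : (w + 1) % 3 = 2 := by
        rw [← f2]
        rw [Equiv.symm_apply_eq] at h2
        rw [h2]
        exact haty
      have hb0 : b.2.val = (π b).val % 3 := hbty.symm
      omega
    · rw [if_neg h1] at k1
      rw [if_neg h2] at k2
      rw [e1] at k1
      rw [e2] at k2
      omega
  have hb : ∀ x : Fin n × Fin 3, derivedPref E a x ≤ if x.2.val = 0 then 1 else 0 := by
    intro x
    rw [ha, dp_z]
    by_cases h : x.2 = 0
    · have : x.2.val = 0 := by rw [h]; rfl
      rw [if_pos this]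
      split_ifs <;> norm_num
    · have : ¬ x.2.val = 0 := fun hv => h (Fin.ext hv)
      rw [if_neg this, if_neg]
      rintro ⟨h0, -⟩
      exact h h0
  have h1 := hb (ρ.symm s₁)
  have h2 := hb (ρ.symm s₂)
  by_cases k1 : (ρ.symm s₁).2.val = 0 <;> by_cases k2 : (ρ.symm s₂).2.val = 0
  · exact absurd ⟨k1, k2⟩ key
  · rw [if_pos k1] at h1; rw [if_neg k2] at h2; linarith
  · rw [if_neg k1] at h1; rw [if_pos k2] at h2; linarith
  · rw [if_neg k1] at h1; rw [if_neg k2] at h2; linarith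

end fwd5

section back
variable {n : ℕ} [NeZero n] {E : Fin n → Fin n → Prop} [DecidableRel E]

lemma dp_nonneg : ∀ x y : Fin n × Fin 3, 0 ≤ derivedPref E x y := by
  intro x y
  unfold derivedPref
  split_ifs <;> norm_num

lemma backward (hn : 2 ≤ n) (hout : ∀ v : Fin n, ∃ u : Fin n, E v u)
    (π : (Fin n × Fin 3) ≃ Fin (3 * n))
    (hEF : envyFree (cycleG (3 * n)) (derivedPref E) π) : hasHamCycle E := by
  haveI : NeZero (3 * n) := ⟨by omega⟩
  have hm : 3 ≤ 3 * n := by omega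
  have hp : ∀ x y : Fin n × Fin 3, 0 ≤ derivedPref E x y := dp_nonneg
  -- step 1 : local structure
  have hxy : ∀ v : Fin n, π (v, 1) = π (v, 0) - 1 ∨ π (v, 1) = π (v, 0) + 1 := by
    intro v
    obtain ⟨d, hd, hdpos⟩ := exists_good_neighbor hm _ hp π hEF
      (a := (v, 0)) (c := (v, 1)) (by simp [Prod.ext_iff, Fin.ext_iff])
      (by rw [dp_x]; simp)
    have hdv : d = (v, 1) := by
      rw [dp_x] at hdpos
      by_contra h
      rw [if_neg h] at hdpos
      exact lt_irrefl 0 hdpos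
    rw [← hdv]
    exact hd
  have hyz : ∀ v : Fin n, π (v, 2) = π (v, 1) - 1 ∨ π (v, 2) = π (v, 1) + 1 := by
    intro v
    obtain ⟨d, hd, hdpos⟩ := exists_good_neighbor hm _ hp π hEF
      (a := (v, 1)) (c := (v, 2)) (by simp [Prod.ext_iff, Fin.ext_iff])
      (by rw [dp_y]; simp)
    have hdv : d = (v, 2) := by
      rw [dp_y] at hdpos
      by_contra h
      rw [if_neg h] at hdpos
      exact lt_irrefl 0 hdpos
    rw [← hdv]
    exact hd
  have hzx : ∀ v : Fin n, ∃ u : Fin n, E v u ∧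
      (π (u, 0) = π (v, 2) - 1 ∨ π (u, 0) = π (v, 2) + 1) := by
    intro v
    obtain ⟨u0, hu0⟩ := hout v
    obtain ⟨d, hd, hdpos⟩ := exists_good_neighbor hm _ hp π hEF
      (a := (v, 2)) (c := (u0, 0)) (by simp [Prod.ext_iff, Fin.ext_iff])
      (by rw [dp_z]; simp [hu0])
    rw [dp_z] at hdpos
    have hcond : d.2 = 0 ∧ E v d.1 := by
      by_contra h
      rw [if_neg h] at hdpos
      exact lt_irrefl 0 hdpos
    refine ⟨d.1, hcond.2, ?_⟩
    have hde : (d.1, (0 : Fin 3)) = d := Prod.ext rfl hcond.1.symm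
    rw [hde]
    exact hd
  -- step 2 : orientation
  set ε : Fin n → Fin (3 * n) := fun v => π (v, 1) - π (v, 0) with hεdef
  have hy : ∀ v, π (v, 1) = π (v, 0) + ε v := by
    intro v
    show π (v, 1) = π (v, 0) + (π (v, 1) - π (v, 0))
    ring
  have hε : ∀ v, ε v = -1 ∨ ε v = 1 := by
    intro v
    rcases hxy v with h | h
    · left; show π (v, 1) - π (v, 0) = -1; rw [h] <;> ring
    · right; show π (v, 1) - π (v, 0) = 1; rw [h] <;> ring
  have hz : ∀ v, π (v, 2) = π (v, 0) + ε v + ε v := by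
    intro v
    rcases hyz v with h | h <;> rcases hε v with he | he
    · rw [h, hy v, he] <;> ring
    · exfalso
      have h2 : π (v, 2) = π (v, 0) := by rw [h, hy v, he] <;> ring
      have := π.injective h2
      simp [Prod.ext_iff, Fin.ext_iff] at this
    · exfalso
      have h2 : π (v, 2) = π (v, 0) := by rw [h, hy v, he] <;> ring
      have := π.injective h2
      simp [Prod.ext_iff, Fin.ext_iff] at this
    · rw [h, hy v, he] <;> ring
  have hkey : ∀ v, ∃ u, E v u ∧ π (u, 0) = π (v, 0) + ε v + ε v + ε v ∧ ε u = ε v := by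
    intro v
    obtain ⟨u, hE, hu⟩ := hzx v
    have hueq : π (u, 0) = π (v, 0) + ε v + ε v + ε v := by
      rcases hu with h | h <;> rcases hε v with he | he
      · rw [h, hz v, he] <;> ring
      · exfalso
        have h2 : π (u, 0) = π (v, 1) := by rw [h, hz v, hy v, he] <;> ring
        have := π.injective h2
        simp [Prod.ext_iff, Fin.ext_iff] at this
      · exfalso
        have h2 : π (u, 0) = π (v, 1) := by rw [h, hz v, hy v, he] <;> ring
        have := π.injective h2
        simp [Prod.ext_iff, Fin.ext_iff] at this
      · rw [h, hz v, he] <;> ring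
    have hεu : ε u = ε v := by
      rcases hε u with hu1 | hu1 <;> rcases hε v with hv1 | hv1
      · rw [hu1, hv1]
      · exfalso
        have h2 : π (u, 1) = π (v, 2) := by rw [hy u, hueq, hz v, hu1, hv1] <;> ring
        have := π.injective h2
        simp [Prod.ext_iff, Fin.ext_iff] at this
      · exfalso
        have h2 : π (u, 1) = π (v, 2) := by rw [hy u, hueq, hz v, hu1, hv1] <;> ring
        have := π.injective h2
        simp [Prod.ext_iff, Fin.ext_iff] at this
      · rw [hu1, hv1]
    exact ⟨u, hE, hueq, hεu⟩
  choose f hfE hfseat hfε using hkey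
  -- step 3 : iterate
  set v0 : Fin n := ⟨0, by omega⟩ with hv0
  have hiter : ∀ k : ℕ, ε (f^[k] v0) = ε v0 ∧
      π (f^[k] v0, 0) = π (v0, 0) + ((3 * k : ℕ) : Fin (3 * n)) * ε v0 := by
    intro k
    induction k with
    | zero => simp
    | succ k ih =>
      rw [Function.iterate_succ_apply']
      refine ⟨(hfε _).trans ih.1, ?_⟩
      rw [hfseat _, ih.2, ih.1]
      push_cast
      ring
  have hsq : ε v0 * ε v0 = 1 := by
    rcases hε v0 with h | h <;> rw [h] <;> ring
  have hcyc : f^[n] v0 = v0 := by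
    have h := (hiter n).2
    rw [Fin.natCast_self, zero_mul, add_zero] at h
    have h2 := π.injective h
    exact (Prod.ext_iff.mp h2).1
  have hinj : ∀ j k : ℕ, j < n → k < n → f^[j] v0 = f^[k] v0 → j = k := by
    intro j k hj hk he
    have h1 := (hiter j).2
    have h2 := (hiter k).2
    rw [he] at h1
    have h3 : ((3 * j : ℕ) : Fin (3 * n)) * ε v0 = ((3 * k : ℕ) : Fin (3 * n)) * ε v0 :=
      add_left_cancel (h1.symm.trans h2)
    have h4 : ((3 * j : ℕ) : Fin (3 * n)) = ((3 * k : ℕ) : Fin (3 * n)) := by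
      calc ((3 * j : ℕ) : Fin (3 * n))
          = ((3 * j : ℕ) : Fin (3 * n)) * ε v0 * ε v0 := by rw [mul_assoc, hsq, mul_one]
        _ = ((3 * k : ℕ) : Fin (3 * n)) * ε v0 * ε v0 := by rw [h3]
        _ = ((3 * k : ℕ) : Fin (3 * n)) := by rw [mul_assoc, hsq, mul_one]
    have h5 := congrArg Fin.val h4
    rw [Fin.val_natCast, Fin.val_natCast,
      Nat.mod_eq_of_lt (by omega), Nat.mod_eq_of_lt (by omega)] at h5
    omega
  -- step 4 : build the hamiltonian cycle
  have hginj : Function.Injective (fun k : Fin n => f^[k.val] v0) := by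
    intro j k h
    exact Fin.ext (hinj _ _ j.isLt k.isLt h)
  refine ⟨Equiv.ofBijective _ (Finite.injective_iff_bijective.mp hginj), ?_⟩
  intro i
  show E (f^[i.val] v0) (f^[(nextSeat i).val] v0)
  have hnv : (nextSeat i).val = (i.val + 1) % n := rfl
  rw [hnv]
  have hnext : f^[(i.val + 1) % n] v0 = f (f^[i.val] v0) := by
    by_cases h : i.val + 1 < n
    · rw [Nat.mod_eq_of_lt h, Function.iterate_succ_apply']
    · have h2 : i.val + 1 = n := by have := i.isLt; omega
      rw [h2, Nat.mod_self]
      calc f^[0] v0 = f^[n] v0 := by rw [Function.iterate_zero_apply, hcyc]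
        _ = f (f^[i.val] v0) := by
            have h3 := Function.iterate_succ_apply' f i.val v0
            rw [show (i.val).succ = n by omega] at h3
            exact h3
  rw [hnext]
  exact hfE _

end back

section fwdfinal
variable {n : ℕ} [NeZero n] {E : Fin n → Fin n → Prop} [DecidableRel E]

lemma forward_envyFree (hn : 2 ≤ n) (σ : Fin n ≃ Fin n)
    (hσ : ∀ i : Fin n, E (σ i) (σ (nextSeat i))) :
    envyFree (cycleG (3 * n)) (derivedPref E) (fwdE hn σ) := by
  intro a b hab henv
  rw [envies] at henv
  have hm : 3 ≤ 3 * n := by omega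
  have h1 : utility (cycleG (3 * n)) (derivedPref E) (fwdE hn σ) a = 1 :=
    util_one hn σ hσ a
  have h2 : utility (cycleG (3 * n)) (derivedPref E) (swapArr (fwdE hn σ) a b) a ≤ 1 := by
    obtain ⟨v, t⟩ := a
    have h3 := t.isLt
    have ht : t = 0 ∨ t = 1 ∨ t = 2 := by
      have hv : t.val = 0 ∨ t.val = 1 ∨ t.val = 2 := by omega
      rcases hv with h | h | h
      · exact Or.inl (Fin.ext h)
      · exact Or.inr (Or.inl (Fin.ext h))
      · exact Or.inr (Or.inr (Fin.ext h))
    rcases ht with h | h | h <;> subst h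
    · exact util_le_single hm (derivedPref E) (swapArr (fwdE hn σ) (v, 0) b) (v, 0) (v, 1)
        (dp_x v)
    · exact util_le_single hm (derivedPref E) (swapArr (fwdE hn σ) (v, 1) b) (v, 1) (v, 2)
        (dp_y v)
    · exact util_z_swap hn σ v b
  linarith

end fwdfinal

/-- for a directed graph on `n ≥ 2` vertices with all out-degrees
positive, the derived profile on `3n` agents has an envy-free arrangement on the
cycle of `3n` seats iff the graph has a Hamiltonian cycle. -/
theorem envy_free_iff_ham_cycle (n : ℕ) (hn : 2 ≤ n)
    (E : Fin n → Fin n → Prop) [DecidableRel E]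
    (hout : ∀ v : Fin n, ∃ u : Fin n, E v u) :
    hasHamCycle E ↔
      ∃ π : (Fin n × Fin 3) ≃ Fin (3 * n),
        envyFree (cycleG (3 * n)) (derivedPref E) π := by
  haveI : NeZero n := ⟨by omega⟩
  constructor
  · rintro ⟨σ, hσ⟩
    exact ⟨fwdE hn σ, forward_envyFree hn σ hσ⟩
  · rintro ⟨π, hEF⟩
    exact backward hn hout π hEF
end

section
/- Defining operators f_3 : 0x1 ↦ 1x̄0 on length-3 binary strings and f_4 : 0xy1 ↦ 1ȳx̄0 on length-4 binary strings (applied to contiguous substrings), for every k ≥ 3 the length-(3k−1) string 0…01 can be transformed into 10…0 by a sequence of applications of f_3 and f_4, and the number of applications used by the recursive construction exceeds 2^{k−1}. -/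
/-!
Write `Z_j = 0^(3j+4) 1` and `O_j = 1 0^(3j+4)` (strings of length `3j+5`). For `j = 0`
two applications of `f₄` give `00001 → 01110 → 10000`. For `j + 1`, one `f₃` at the right
end turns `Z_(j+1)` into `0 Z_j 10`; running the chain for `Z_j` inside this context gives
`0 O_j 10 = 01 Z_j 0`, running it again gives `01 O_j 0 = 011 0^(3j+5)`, and one `f₃` at the
left end gives `O_(j+1)`. The chain lengths satisfy `n_(j+1) = 2 n_j + 2`, so `n_j = 2^(j+2) - 2`.
-/

/-- One rewriting step: apply `f₃ : 0x1 ↦ 1x̄0` or `f₄ : 0xy1 ↦ 1ȳx̄0` to a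
contiguous substring of a binary string (`false` = 0, `true` = 1). -/
def rewriteStep (s t : List Bool) : Prop :=
  ∃ u v : List Bool,
    (∃ x : Bool, s = u ++ [false, x, true] ++ v ∧ t = u ++ [true, !x, false] ++ v) ∨
    (∃ x y : Bool, s = u ++ [false, x, y, true] ++ v ∧
      t = u ++ [true, !y, !x, false] ++ v)

theorem rewriteStep.append_append {s t : List Bool} (h : rewriteStep s t) (a b : List Bool) :
    rewriteStep (a ++ s ++ b) (a ++ t ++ b) := by
  obtain ⟨u, v, ⟨x, rfl, rfl⟩ | ⟨x, y, rfl, rfl⟩⟩ := h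
  · exact ⟨a ++ u, v ++ b, .inl ⟨x, by simp, by simp⟩⟩
  · exact ⟨a ++ u, v ++ b, .inr ⟨x, y, by simp, by simp⟩⟩

def RewritesIn (n : ℕ) (s t : List Bool) : Prop :=
  ∃ f : ℕ → List Bool, f 0 = s ∧ f n = t ∧ ∀ i < n, rewriteStep (f i) (f (i + 1))

namespace RewritesIn

variable {m n : ℕ} {s t u : List Bool}

theorem single (h : rewriteStep s t) : RewritesIn 1 s t :=
  ⟨fun i => if i = 0 then s else t, rfl, rfl,
    fun i hi => by simpa [Nat.lt_one_iff.mp hi] using h⟩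

theorem trans (h₁ : RewritesIn m s t) (h₂ : RewritesIn n t u) : RewritesIn (m + n) s u := by
  obtain ⟨f, rfl, rfl, hf⟩ := h₁
  obtain ⟨g, hg0, rfl, hg⟩ := h₂
  refine ⟨fun i => if i ≤ m then f i else g (i - m), by simp, ?_, fun i hi => ?_⟩
  · rcases Nat.eq_zero_or_pos n with rfl | hn
    · simp [hg0]
    · simp [show ¬ m + n ≤ m by omega]
  · rcases Nat.lt_or_ge i m with him | him
    · simpa [him.le, Nat.succ_le_of_lt him] using hf i him
    · have hstep := hg (i - m) (by omega)
      rw [show i - m + 1 = i + 1 - m by omega] at hstep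
      rcases him.eq_or_lt with rfl | him
      · simpa [hg0] using hstep
      · simpa [show ¬ i ≤ m by omega, show ¬ i + 1 ≤ m by omega] using hstep

theorem append_append (h : RewritesIn n s t) (a b : List Bool) :
    RewritesIn n (a ++ s ++ b) (a ++ t ++ b) := by
  obtain ⟨f, rfl, rfl, hf⟩ := h
  exact ⟨fun i => a ++ f i ++ b, rfl, rfl, fun i hi => (hf i hi).append_append a b⟩

end RewritesIn

open List in
theorem rewritesIn_zeros_one_to_one_zeros (j : ℕ) :
    RewritesIn (2 ^ (j + 2) - 2) (replicate (3 * j + 4) false ++ [true])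
      (true :: replicate (3 * j + 4) false) := by
  induction j with
  | zero =>
    exact (RewritesIn.single ⟨[false], [], .inr ⟨false, false, rfl, rfl⟩⟩).trans
      (RewritesIn.single ⟨[], [false], .inr ⟨true, true, rfl, rfl⟩⟩)
  | succ j ih =>
    have first : RewritesIn 1 (replicate (3 * (j + 1) + 4) false ++ [true])
        ([false] ++ (replicate (3 * j + 4) false ++ [true]) ++ [true, false]) :=
      .single ⟨replicate (3 * j + 5) false, [], .inl ⟨false,
        by simp [replicate_succ', show 3 * (j + 1) + 4 = 3 * j + 5 + 1 + 1 by omega],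
        by simp [replicate_succ]⟩⟩
    have last : RewritesIn 1 ([false, true] ++ (true :: replicate (3 * j + 4) false) ++ [false])
        (true :: replicate (3 * (j + 1) + 4) false) :=
      .single ⟨[], replicate (3 * j + 5) false, .inl ⟨true,
        by simp [replicate_succ'],
        by simp [replicate_succ, show 3 * (j + 1) + 4 = 3 * j + 5 + 1 + 1 by omega]⟩⟩
    have middle : [false] ++ (true :: replicate (3 * j + 4) false) ++ [true, false]
        = [false, true] ++ (replicate (3 * j + 4) false ++ [true]) ++ [false] := by simp
    have chain := (first.trans (ih.append_append [false] [true, false])).trans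
      (middle ▸ (ih.append_append [false, true] [false]).trans last)
    have hcount : 1 + (2 ^ (j + 2) - 2) + (2 ^ (j + 2) - 2 + 1) = 2 ^ (j + 1 + 2) - 2 := by
      have := Nat.one_lt_two_pow (n := j + 2) (by omega)
      rw [pow_succ 2 (j + 2)]; omega
    rwa [hcount] at chain

/-- for every `k ≥ 3`, the length-`(3k−1)` string `0…01` can be
transformed into `10…0` by successive applications of `f₃` and `f₄`, using a
number of applications exceeding `2^(k−1)`. -/
theorem rewrite_chain_exponential (k : ℕ) (hk : 3 ≤ k) :
    ∃ (m : ℕ) (f : ℕ → List Bool),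
      2 ^ (k - 1) < m ∧
      f 0 = List.replicate (3 * k - 2) false ++ [true] ∧
      f m = true :: List.replicate (3 * k - 2) false ∧
      ∀ i < m, rewriteStep (f i) (f (i + 1)) := by
  obtain ⟨f, h0, hm, hstep⟩ := rewritesIn_zeros_one_to_one_zeros (k - 2)
  rw [show 3 * (k - 2) + 4 = 3 * k - 2 by omega] at h0 hm
  rw [show k - 2 + 2 = k by omega] at hm hstep
  have hcount : 2 ^ (k - 1) < 2 ^ k - 2 := by
    have h4 : 4 ≤ 2 ^ (k - 1) := Nat.pow_le_pow_right two_pos (by omega : 2 ≤ k - 1)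
    have hk' : 2 ^ k = 2 * 2 ^ (k - 1) := by rw [← pow_succ', Nat.sub_add_cancel (by omega)]
    omega
  exact ⟨2 ^ k - 2, f, hcount, h0, hm, hstep⟩
end
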